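/- Let a, b, c be a non-equilateral isosceles triangle in ℝ² with apex a, vertex angle α and base angle β, and let p be a point on the opposite side of line bc from a, in the region where both ∠cap < α and ∠bap < α, such that {a,b,c,p} determine at most two distinct angle values. Then α = π/2, β = π/4, and acpb is a square. -/

import Mathlib

open EuclideanGeometry

noncomputable section

abbrev Pt : Type := EuclideanSpace ℝ (Fin 2)

/-- The point (x, y) in the Euclidean plane. -/
def pt (x y : ℝ) : Pt := (WithLp.equiv 2 (Fin 2 → ℝ)).symm ![x, y]

/-- The set of distinct angle values in (0, π) determined by a planar point set. -/
def angleSet (P : Set Pt) : Set ℝ :=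
  {θ : ℝ | θ ∈ Set.Ioo 0 Real.pi ∧
    ∃ x ∈ P, ∃ y ∈ P, ∃ z ∈ P, x ≠ y ∧ y ≠ z ∧ x ≠ z ∧ ∠ x y z = θ}

/-! Every angle of the configuration lying in `(0, π)` is `α` or `β`. The angles `∠bap` and
`∠pac` are smaller than `α` but add up to at least `α`, so both equal `β`; in the plane this forces
`α = 2β`, and with `α + 2β = π` we get `α = π/2`, `β = π/4`. Each of the triangles `abp`, `acp` then
has angle `π/4` at `a` and its other angles among `π/4, π/2`, so it is right isosceles with the right
angle at `b` (resp. `c`) or at `p`. Comparing `|ap|` in the two triangles rules out the mixed cases,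
and right angles at `p` in both would put `p` on the segment `bc`; so the right angles are at `b`
and `c`, and `acpb` is a square. -/

open Real

section Triangle

variable {V P : Type*} [NormedAddCommGroup V] [InnerProductSpace ℝ V] [MetricSpace P]
  [NormedAddTorsor V P]

theorem angle_add_two_mul_angle_eq_pi_of_dist_eq {p₁ p₂ p₃ : P} (h : dist p₁ p₂ = dist p₁ p₃)
    (h₁₂ : p₁ ≠ p₂) : ∠ p₂ p₁ p₃ + 2 * ∠ p₁ p₂ p₃ = π := by
  have hsum := angle_add_angle_add_angle_eq_pi p₃ h₁₂.symm
  rw [angle_comm p₂ p₃, ← angle_eq_angle_of_dist_eq h, angle_comm p₃] at hsum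
  linarith

theorem dist_eq_and_dist_sq_eq_of_angle_eq_pi_div_four_of_angle_eq_pi_div_two {p₁ p₂ p₃ : P}
    (h₁₂ : p₁ ≠ p₂) (h₁ : ∠ p₂ p₁ p₃ = π / 4) (h₂ : ∠ p₁ p₂ p₃ = π / 2) :
    dist p₂ p₃ = dist p₁ p₂ ∧ dist p₁ p₃ ^ 2 = 2 * dist p₁ p₂ ^ 2 := by
  have hsum := angle_add_angle_add_angle_eq_pi p₃ h₁₂.symm
  rw [angle_comm p₃] at hsum
  have hdist : dist p₂ p₁ = dist p₂ p₃ :=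
    dist_eq_of_angle_eq_angle_of_angle_ne_pi (by linarith) (by linarith [pi_pos])
  have hpyth := (dist_sq_eq_dist_sq_add_dist_sq_iff_angle_eq_pi_div_two p₁ p₂ p₃).2 h₂
  rw [dist_comm p₂ p₁] at hdist
  rw [dist_comm p₃ p₂, ← hdist] at hpyth
  exact ⟨hdist.symm, by linarith⟩

theorem right_isosceles_of_angles_mem {p₁ p₂ p₃ : P} (h₁₂ : p₁ ≠ p₂) (h₁₃ : p₁ ≠ p₃)
    (h₁ : ∠ p₂ p₁ p₃ = π / 4) (h₂ : ∠ p₁ p₂ p₃ ∈ ({0, π, π / 2, π / 4} : Set ℝ))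
    (h₃ : ∠ p₁ p₃ p₂ ∈ ({0, π, π / 2, π / 4} : Set ℝ)) :
    (dist p₂ p₃ = dist p₁ p₂ ∧ dist p₁ p₃ ^ 2 = 2 * dist p₁ p₂ ^ 2) ∨
      (dist p₃ p₂ = dist p₁ p₃ ∧ dist p₁ p₂ ^ 2 = 2 * dist p₁ p₃ ^ 2) := by
  have hsum := angle_add_angle_add_angle_eq_pi p₃ h₁₂.symm
  rw [angle_comm p₃, h₁, angle_comm p₂] at hsum
  simp only [Set.mem_insert_iff, Set.mem_singleton_iff] at h₂ h₃
  have hright : ∠ p₁ p₂ p₃ = π / 2 ∨ ∠ p₁ p₃ p₂ = π / 2 := by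
    rcases h₂ with h₂ | h₂ | h₂ | h₂ <;> rcases h₃ with h₃ | h₃ | h₃ | h₃ <;>
      first | exact .inl h₂ | exact .inr h₃ | (exfalso; linarith [pi_pos])
  rcases hright with h₂ | h₃
  · exact .inl (dist_eq_and_dist_sq_eq_of_angle_eq_pi_div_four_of_angle_eq_pi_div_two h₁₂ h₁ h₂)
  · exact .inr (dist_eq_and_dist_sq_eq_of_angle_eq_pi_div_four_of_angle_eq_pi_div_two h₁₃
      (by rwa [angle_comm]) h₃)

theorem angle_eq_and_angle_eq_of_lt_of_mem {p p₁ p₂ p₃ : P} {α β : ℝ} (hα : ∠ p₁ p p₃ = α)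
    (h₁ : ∠ p₁ p p₂ ∈ ({0, π, α, β} : Set ℝ)) (h₂ : ∠ p₂ p p₃ ∈ ({0, π, α, β} : Set ℝ))
    (h₁α : ∠ p₁ p p₂ < α) (h₂α : ∠ p₂ p p₃ < α) : ∠ p₁ p p₂ = β ∧ ∠ p₂ p p₃ = β := by
  have htri := angle_le_angle_add_angle p p₁ p₂ p₃
  have hπ := angle_le_pi p₁ p p₃
  simp only [Set.mem_insert_iff, Set.mem_singleton_iff] at h₁ h₂
  rcases h₁ with h₁ | h₁ | h₁ | h₁ <;> rcases h₂ with h₂ | h₂ | h₂ | h₂ <;>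
    first | exact ⟨h₁, h₂⟩ | (exfalso; linarith)

theorem square_of_right_isosceles {a b c p : P} (hab : a ≠ b) (hiso : dist a b = dist a c)
    (hbac : ∠ b a c = π / 2) (hp : p ∉ line[ℝ, b, c])
    (hb : (dist b p = dist a b ∧ dist a p ^ 2 = 2 * dist a b ^ 2) ∨
      (dist p b = dist a p ∧ dist a b ^ 2 = 2 * dist a p ^ 2))
    (hc : (dist c p = dist a c ∧ dist a p ^ 2 = 2 * dist a c ^ 2) ∨
      (dist p c = dist a p ∧ dist a c ^ 2 = 2 * dist a p ^ 2)) :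
    dist a c = dist c p ∧ dist c p = dist p b ∧ dist p b = dist b a ∧ dist a p = dist c b := by
  have hpyth := (dist_sq_eq_dist_sq_add_dist_sq_iff_angle_eq_pi_div_two b a c).2 hbac
  rw [dist_comm b a, dist_comm c a, ← hiso] at hpyth
  have hab₀ : 0 < dist a b := dist_pos.2 hab
  rw [← hiso] at hc
  rcases hb with ⟨hbp, hapb⟩ | ⟨hpb, habp⟩ <;> rcases hc with ⟨hcp, hapc⟩ | ⟨hpc, hacp⟩
  · have hpb : dist p b = dist a b := by rw [dist_comm, hbp]
    refine ⟨by rw [hcp, hiso], by rw [hcp, hpb], by rw [hpb, dist_comm], ?_⟩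
    rw [dist_comm c b]
    exact (pow_left_inj₀ dist_nonneg dist_nonneg two_ne_zero).1 (by nlinarith)
  · nlinarith
  · nlinarith
  · -- |bc| = 2 |ap| = |bp| + |pc| puts p on the segment bc
    have hbc : dist b c = dist b p + dist p c := by
      rw [dist_comm b p, hpb, hpc]
      nlinarith [dist_nonneg (x := b) (y := c), dist_nonneg (x := a) (y := p)]
    exact absurd (dist_add_dist_eq_iff.1 hbc.symm).mem_affineSpan hp

end Triangle

section Plane

variable {V P : Type*} [NormedAddCommGroup V] [InnerProductSpace ℝ V] [MetricSpace P]
  [NormedAddTorsor V P] [Fact (Module.finrank ℝ V = 2)]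

theorem angle_eq_two_mul_of_angle_eq_of_angle_eq {p p₁ p₂ p₃ : P} {β : ℝ} (hp₁ : p₁ ≠ p)
    (hp₂ : p₂ ≠ p) (hp₃ : p₃ ≠ p) (h₁₂ : ∠ p₁ p p₂ = β) (h₂₃ : ∠ p₂ p p₃ = β) (hβ : β ≤ π / 2)
    (h₀ : ∠ p₁ p p₃ ≠ 0) : ∠ p₁ p p₃ = 2 * β := by
  have : FiniteDimensional ℝ V := .of_fact_finrank_eq_two
  -- the two halves have equal or opposite orientations, so `∡ p₁ p p₃` is `±2β` or `0`
  let _ : Module.Oriented ℝ V (Fin 2) :=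
    ⟨(Module.finBasisOfFinrankEq ℝ V Fact.out).orientation⟩
  have hβ₀ : 0 ≤ β := h₁₂ ▸ angle_nonneg _ _ _
  have hmem : ∠ p₁ p p₃ ∈ Set.Icc 0 π := ⟨angle_nonneg _ _ _, angle_le_pi _ _ _⟩
  have hcos : cos (∠ p₁ p p₃) = cos (2 * β) ∨ cos (∠ p₁ p p₃) = cos 0 := by
    rw [← cos_oangle_eq_cos_angle hp₁ hp₃, ← oangle_add hp₁ hp₂ hp₃]
    rcases oangle_eq_angle_or_eq_neg_angle hp₁ hp₂ with h | h <;>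
      rcases oangle_eq_angle_or_eq_neg_angle hp₂ hp₃ with h' | h' <;>
      simp [h, h', h₁₂, h₂₃, ← Real.Angle.coe_add, ← Real.Angle.coe_neg, two_mul, -neg_add_rev,
        ← neg_add]
  rcases hcos with h | h
  · exact injOn_cos hmem ⟨by linarith, by linarith⟩ h
  · exact absurd (injOn_cos hmem ⟨le_rfl, pi_pos.le⟩ h) h₀

end Plane

instance : Fact (Module.finrank ℝ Pt = 2) := ⟨finrank_euclideanSpace_fin⟩

theorem angleSet_finite {P : Set Pt} (hP : P.Finite) : (angleSet P).Finite := by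
  refine ((hP.prod (hP.prod hP)).image fun t : Pt × Pt × Pt => ∠ t.1 t.2.1 t.2.2).subset ?_
  rintro θ ⟨-, x, hx, y, hy, z, hz, -, -, -, rfl⟩
  exact ⟨(x, y, z), ⟨hx, hy, hz⟩, rfl⟩

theorem angleSet_eq_pair {P : Set Pt} (hP : P.Finite) (h : (angleSet P).ncard ≤ 2) {α β : ℝ}
    (hα : α ∈ angleSet P) (hβ : β ∈ angleSet P) (hne : α ≠ β) : angleSet P = {α, β} :=
  (Set.eq_of_subset_of_ncard_le (Set.pair_subset hα hβ) (by rwa [Set.ncard_pair hne])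
    (angleSet_finite hP)).symm

theorem angle_mem_angleSet {P : Set Pt} {x y z : Pt} (hx : x ∈ P) (hy : y ∈ P) (hz : z ∈ P)
    (hxy : x ≠ y) (hyz : y ≠ z) (hxz : x ≠ z) : ∠ x y z ∈ insert 0 (insert π (angleSet P)) := by
  rcases (angle_nonneg x y z).eq_or_lt with h₀ | h₀
  · exact .inl h₀.symm
  rcases (angle_le_pi x y z).eq_or_lt with hπ | hπ
  · exact .inr (.inl hπ)
  exact .inr (.inr ⟨⟨h₀, hπ⟩, x, hx, y, hy, z, hz, hxy, hyz, hxz, rfl⟩)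

theorem angle_mem_angleSet_of_not_collinear {P : Set Pt} {x y z : Pt} (hx : x ∈ P) (hy : y ∈ P)
    (hz : z ∈ P) (h : ¬ Collinear ℝ ({x, y, z} : Set Pt)) : ∠ x y z ∈ angleSet P :=
  ⟨⟨angle_pos_of_not_collinear h, angle_lt_pi_of_not_collinear h⟩, x, hx, y, hy, z, hz,
    ne₁₂_of_not_collinear h, ne₂₃_of_not_collinear h, ne₁₃_of_not_collinear h, rfl⟩

theorem stmt16 (a b c p : Pt) (α β : ℝ)
    (hcol : ¬ Collinear ℝ ({a, b, c} : Set Pt))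
    (hiso : dist a b = dist a c)
    (hα : ∠ b a c = α) (hβ : ∠ a b c = β) (hne : α ≠ β)
    (hside : (affineSpan ℝ ({b, c} : Set Pt)).SOppSide a p)
    (h1 : ∠ c a p < α) (h2 : ∠ b a p < α)
    (hcount : (angleSet {a, b, c, p}).ncard ≤ 2) :
    α = Real.pi / 2 ∧ β = Real.pi / 4 ∧
    dist a c = dist c p ∧ dist c p = dist p b ∧ dist p b = dist b a ∧
    dist a p = dist c b := by
  have hab := ne₁₂_of_not_collinear hcol
  have hac := ne₁₃_of_not_collinear hcol
  have hpa : p ≠ a := by rintro rfl; exact AffineSubspace.not_sOppSide_self _ _ hside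
  have hpb : p ≠ b := fun h => hside.right_notMem (h ▸ left_mem_affineSpan_pair ℝ b c)
  have hpc : p ≠ c := fun h => hside.right_notMem (h ▸ right_mem_affineSpan_pair ℝ b c)
  have hsum : α + 2 * β = π := hα ▸ hβ ▸ angle_add_two_mul_angle_eq_pi_of_dist_eq hiso hab
  have hαS : α ∈ angleSet {a, b, c, p} := hα ▸ angle_mem_angleSet_of_not_collinear (by simp)
    (by simp) (by simp) (by rwa [Set.insert_comm])
  have hβS : β ∈ angleSet {a, b, c, p} :=
    hβ ▸ angle_mem_angleSet_of_not_collinear (by simp) (by simp) (by simp) hcol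
  have hangle : ∀ {x y z : Pt}, x ∈ ({a, b, c, p} : Set Pt) → y ∈ ({a, b, c, p} : Set Pt) →
      z ∈ ({a, b, c, p} : Set Pt) → x ≠ y → y ≠ z → x ≠ z → ∠ x y z ∈ ({0, π, α, β} : Set ℝ) :=
    fun hx hy hz hxy hyz hxz => angleSet_eq_pair (Set.toFinite _) hcount hαS hβS hne ▸
      angle_mem_angleSet hx hy hz hxy hyz hxz
  have hbap : ∠ b a p = β ∧ ∠ p a c = β := angle_eq_and_angle_eq_of_lt_of_mem hα
    (hangle (by simp) (by simp) (by simp) hab.symm hpa.symm hpb.symm)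
    (hangle (by simp) (by simp) (by simp) hpa hac hpc) h2 (by rwa [angle_comm])
  have hα2 : α = 2 * β := hα ▸ angle_eq_two_mul_of_angle_eq_of_angle_eq hab.symm hpa hac.symm
    hbap.1 hbap.2 (by linarith [hαS.1.1]) (hα ▸ hαS.1.1.ne')
  obtain rfl : α = π / 2 := by linarith
  obtain rfl : β = π / 4 := by linarith
  refine ⟨rfl, rfl, square_of_right_isosceles hab hiso hα hside.right_notMem ?_ ?_⟩
  · exact right_isosceles_of_angles_mem hab hpa.symm hbap.1
      (hangle (by simp) (by simp) (by simp) hab hpb.symm hpa.symm)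
      (hangle (by simp) (by simp) (by simp) hpa.symm hpb hab)
  · exact right_isosceles_of_angles_mem hac hpa.symm (by rw [angle_comm, hbap.2])
      (hangle (by simp) (by simp) (by simp) hac hpc.symm hpa.symm)
      (hangle (by simp) (by simp) (by simp) hpa.symm hpc hac)
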